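/- Let τ = (1-√5)/2, λ ≥ 1, and suppose f(z) = z + a₂z² + a₃z³ + … is bi-univalent with z[f'(z)]^λ/f(z) ≺ p̃(z) and w[g'(w)]^λ/g(w) ≺ p̃(w) for g = f⁻¹, where p̃(z) = (1+τ²z²)/(1-τz-τ²z²). Then |a₂| ≤ |τ|/√((2λ-1)[τ(3-5λ) + 2λ - 1]). -/

import Mathlib

/-!
In Taylor coefficients, with `p̃(z) = 1 + τ z + 3τ² z² + ⋯` and Schwarz functions `w`, `v` for `f`
and `g = f⁻¹`, comparing the coefficients of `z²` and `z³` in `z f'(z)^λ = f(z) p̃(w(z))` gives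
`(2λ-1) a₂ = τ w₁`, `-(2λ-1) a₂ = τ v₁` and two relations containing `a₃`. The inverse has third
coefficient `2a₂² - a₃`, so adding these two relations eliminates `a₃` and leaves
`τ (w₂ + v₂) = -2(2λ-1)(5λ-3) a₂²`. The sharp bound `|w₂| ≤ 1 - |w₁|²` for Schwarz functions
(Schwarz–Pick applied to `w(z)/z`) then bounds `|a₂|`.
-/

open Filter Topology Metric Set Complex ComplexConjugate

lemma iteratedDeriv_succ_fun_id_mul_zero {𝕜 : Type*} [NontriviallyNormedField 𝕜] {G : 𝕜 → 𝕜}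
    {n : ℕ} (hG : ContDiffAt 𝕜 (n + 1 : ℕ) G 0) :
    iteratedDeriv (n + 1) (fun z => z * G z) 0 = (n + 1) * iteratedDeriv n G 0 := by
  rw [iteratedDeriv_fun_mul (f := fun z => z) contDiffAt_id hG, Finset.sum_range_succ',
    Finset.sum_range_succ']
  simp [iteratedDeriv_fun_id_zero]

lemma one_sub_conj_mul_ne_zero {a z : ℂ} (ha : ‖a‖ < 1) (hz : ‖z‖ < 1) : 1 - conj a * z ≠ 0 := by
  refine sub_ne_zero.mpr fun h => ?_
  have : ‖conj a * z‖ < 1 := by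
    rw [norm_mul, RCLike.norm_conj]; nlinarith [norm_nonneg a, norm_nonneg z]
  simp [← h] at this

lemma norm_moebius_lt_one {a z : ℂ} (ha : ‖a‖ < 1) (hz : ‖z‖ < 1) :
    ‖(a - z) / (1 - conj a * z)‖ < 1 := by
  have hden := norm_pos_iff.mpr (one_sub_conj_mul_ne_zero ha hz)
  rw [norm_div, div_lt_one hden, ← pow_lt_pow_iff_left₀ (norm_nonneg _) hden.le two_ne_zero,
    Complex.sq_norm, Complex.sq_norm]
  have key : normSq (1 - conj a * z) - normSq (a - z) = (1 - normSq a) * (1 - normSq z) := by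
    simp only [normSq_apply, sub_re, sub_im, mul_re, mul_im, conj_re, conj_im, one_re, one_im]
    ring
  have ha' : normSq a < 1 := by rw [← Complex.sq_norm]; nlinarith [norm_nonneg a]
  have hz' : normSq z < 1 := by rw [← Complex.sq_norm]; nlinarith [norm_nonneg z]
  nlinarith

lemma hasDerivAt_moebius_self {a : ℂ} (ha : ‖a‖ < 1) :
    HasDerivAt (fun z => (a - z) / (1 - conj a * z)) (-((1 - ‖a‖ ^ 2 : ℝ) : ℂ)⁻¹) a := by
  have hden := one_sub_conj_mul_ne_zero ha ha
  have hs : conj a * a = ((‖a‖ ^ 2 : ℝ) : ℂ) := by rw [Complex.conj_mul']; push_cast; rfl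
  refine (((hasDerivAt_id a).const_sub a).div
    (((hasDerivAt_id a).const_mul (conj a)).const_sub 1) hden).congr_deriv ?_
  simp only [id, mul_one, sub_self, zero_mul, sub_zero, hs] at hden ⊢
  push_cast at hden ⊢
  field_simp

lemma norm_deriv_le_one_sub_sq_of_mapsTo_ball {q : ℂ → ℂ} (hq : DifferentiableOn ℂ q (ball 0 1))
    (hmaps : MapsTo q (ball 0 1) (ball 0 1)) :
    ‖deriv q 0‖ ≤ 1 - ‖q 0‖ ^ 2 := by
  set a := q 0
  have ha : ‖a‖ < 1 := mem_ball_zero_iff.mp (hmaps (mem_ball_self one_pos))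
  have ha2 : 0 < 1 - ‖a‖ ^ 2 := by nlinarith [norm_nonneg a]
  set φ : ℂ → ℂ := fun z => (a - z) / (1 - conj a * z)
  have hφq : DifferentiableOn ℂ (φ ∘ q) (ball 0 1) := fun z hz => by
    have hden := one_sub_conj_mul_ne_zero ha (mem_ball_zero_iff.mp (hmaps hz))
    have hφ : DifferentiableAt ℂ φ (q z) := DifferentiableAt.div (by fun_prop) (by fun_prop) hden
    exact hφ.comp_differentiableWithinAt z (hq z hz)
  have hmaps' : MapsTo (φ ∘ q) (ball 0 1) (closedBall ((φ ∘ q) 0) 1) := fun z hz => by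
    simpa [φ, a] using (norm_moebius_lt_one ha (mem_ball_zero_iff.mp (hmaps hz))).le
  have hderiv : HasDerivAt (φ ∘ q) (-((1 - ‖a‖ ^ 2 : ℝ) : ℂ)⁻¹ * deriv q 0) 0 :=
    (hasDerivAt_moebius_self ha).comp 0
      (hq.differentiableAt (isOpen_ball.mem_nhds (mem_ball_self one_pos))).hasDerivAt
  have := Complex.norm_deriv_le_div_of_mapsTo_ball hφq hmaps' one_pos
  rwa [hderiv.deriv, norm_mul, norm_neg, norm_inv, Complex.norm_real,
    Real.norm_of_nonneg ha2.le, div_one, inv_mul_le_iff₀ ha2, mul_one] at this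

lemma norm_deriv_le_one_sub_sq_of_norm_le_one {q : ℂ → ℂ} (hq : DifferentiableOn ℂ q (ball 0 1))
    (hle : ∀ z ∈ ball (0 : ℂ) 1, ‖q z‖ ≤ 1) :
    ‖deriv q 0‖ ≤ 1 - ‖q 0‖ ^ 2 := by
  by_cases hmax : ∃ z₀ ∈ ball (0 : ℂ) 1, ‖q z₀‖ = 1
  · -- maximum modulus: `q` is constant, of modulus one
    obtain ⟨z₀, hz₀, hqz₀⟩ := hmax
    have hconst : q =ᶠ[𝓝 0] fun _ => q z₀ :=
      eventually_of_mem (isOpen_ball.mem_nhds (mem_ball_self one_pos)) <|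
        Complex.eqOn_of_isPreconnected_of_isMaxOn_norm (convex_ball 0 1).isPreconnected
          isOpen_ball hq hz₀ fun z hz => by simpa [hqz₀] using hle z hz
    simp [hconst.deriv_eq, hconst.eq_of_nhds, hqz₀]
  · push Not at hmax
    exact norm_deriv_le_one_sub_sq_of_mapsTo_ball hq fun z hz =>
      mem_ball_zero_iff.mpr ((hle z hz).lt_of_ne (hmax z hz))

theorem norm_iteratedDeriv_two_le_of_mapsTo_ball {w : ℂ → ℂ}
    (hw : DifferentiableOn ℂ w (ball 0 1)) (hw0 : w 0 = 0)
    (hmaps : MapsTo w (ball 0 1) (ball 0 1)) :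
    ‖iteratedDeriv 2 w 0‖ ≤ 2 * (1 - ‖deriv w 0‖ ^ 2) := by
  have h0 : ball (0 : ℂ) 1 ∈ 𝓝 0 := isOpen_ball.mem_nhds (mem_ball_self one_pos)
  -- Schwarz's lemma applied to `w` makes its difference quotient `q` a self-map of the closed disc
  set q := dslope w 0
  have hq : DifferentiableOn ℂ q (ball 0 1) := (differentiableOn_dslope h0).mpr hw
  have hq1 : ∀ z ∈ ball (0 : ℂ) 1, ‖q z‖ ≤ 1 := fun z hz => by
    simpa [hw0] using Complex.norm_dslope_le_div_of_mapsTo_ball hw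
      (by rw [hw0]; exact hmaps.mono_right ball_subset_closedBall) hz
  have hwq : w =ᶠ[𝓝 0] fun z => z * q z := by
    filter_upwards [h0] with z hz
    simpa [hw0] using (sub_smul_dslope w 0 z).symm
  have hq2 : ContDiffAt ℂ (1 + 1 : ℕ) q 0 :=
    (hq.analyticOnNhd isOpen_ball 0 (mem_of_mem_nhds h0)).contDiffAt
  have hSP := norm_deriv_le_one_sub_sq_of_norm_le_one hq hq1
  rw [show q 0 = deriv w 0 from dslope_same w 0] at hSP
  rw [hwq.iteratedDeriv_eq, iteratedDeriv_succ_fun_id_mul_zero hq2, iteratedDeriv_one, norm_mul,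
    show ‖((1 : ℕ) + 1 : ℂ)‖ = 2 by norm_num]
  linarith

lemma iteratedDeriv_cpow_const_one (L : ℂ) :
    deriv (fun u : ℂ => u ^ L) 1 = L ∧ iteratedDeriv 2 (fun u : ℂ => u ^ L) 1 = L * (L - 1) := by
  have hd : deriv (fun u : ℂ => u ^ L) =ᶠ[𝓝 1] fun u => L * u ^ (L - 1) :=
    eventually_of_mem (isOpen_slitPlane.mem_nhds one_mem_slitPlane) fun u hu =>
      Complex.deriv_cpow_const hu
  refine ⟨by simp [hd.eq_of_nhds], ?_⟩
  rw [iteratedDeriv_succ, iteratedDeriv_one, hd.deriv_eq, deriv_const_mul_field']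
  simp [Complex.deriv_cpow_const one_mem_slitPlane]

theorem iteratedDeriv_cpow_const_comp {u : ℂ → ℂ} {x L : ℂ} (hu : ContDiffAt ℂ 2 u x)
    (hux : u x = 1) :
    deriv (fun z => u z ^ L) x = L * deriv u x ∧
      iteratedDeriv 2 (fun z => u z ^ L) x =
        L * (L - 1) * deriv u x ^ 2 + L * iteratedDeriv 2 u x := by
  obtain ⟨h1, h2⟩ := iteratedDeriv_cpow_const_one L
  have hpow : ContDiffAt ℂ 2 (fun u : ℂ => u ^ L) (u x) := by
    rw [hux]; exact (analyticAt_id.cpow analyticAt_const one_mem_slitPlane).contDiffAt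
  constructor
  · rw [deriv_cpow_const (hu.differentiableAt two_ne_zero) (hux ▸ one_mem_slitPlane), hux]
    simp
  · have := iteratedDeriv_comp_two hpow hu
    rwa [hux, h1, h2] at this

theorem coeff_relations_of_mul_deriv_cpow_eventuallyEq {F P : ℂ → ℂ} {L : ℂ}
    (hF : AnalyticAt ℂ F 0) (hP : AnalyticAt ℂ P 0) (hF0 : F 0 = 0) (hF1 : deriv F 0 = 1)
    (h : (fun z => z * deriv F z ^ L) =ᶠ[𝓝 0] fun z => F z * P z) :
    (2 * L - 1) * iteratedDeriv 2 F 0 = 2 * deriv P 0 ∧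
      3 * L * (L - 1) * iteratedDeriv 2 F 0 ^ 2 + (3 * L - 1) * iteratedDeriv 3 F 0
        - 3 * iteratedDeriv 2 F 0 * deriv P 0 = 3 * iteratedDeriv 2 P 0 := by
  have hF' : AnalyticAt ℂ (deriv F) 0 := hF.deriv
  have hH : AnalyticAt ℂ (fun z => deriv F z ^ L) 0 :=
    hF'.cpow analyticAt_const (hF1 ▸ one_mem_slitPlane)
  obtain ⟨hH1, hH2⟩ := iteratedDeriv_cpow_const_comp (L := L) hF'.contDiffAt hF1
  have hF2 : deriv (deriv F) 0 = iteratedDeriv 2 F 0 := by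
    rw [iteratedDeriv_succ', iteratedDeriv_one]
  have hF3 : iteratedDeriv 2 (deriv F) 0 = iteratedDeriv 3 F 0 := by
    rw [iteratedDeriv_succ' (n := 2)]
  have e : ∀ n : ℕ, (n + 1 : ℂ) * iteratedDeriv n (fun z => deriv F z ^ L) 0 =
      ∑ i ∈ Finset.range (n + 2), (n + 1).choose i * iteratedDeriv i F 0 *
        iteratedDeriv (n + 1 - i) P 0 := fun n => by
    rw [← iteratedDeriv_succ_fun_id_mul_zero hH.contDiffAt, h.iteratedDeriv_eq,
      iteratedDeriv_fun_mul hF.contDiffAt hP.contDiffAt]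
  have hP0 : P 0 = 1 := by simpa [Finset.sum_range_succ, hF0, hF1] using (e 0).symm
  have e2 : 2 * (L * iteratedDeriv 2 F 0) = 2 * deriv P 0 + iteratedDeriv 2 F 0 := by
    simpa [Finset.sum_range_succ, hF0, hF1, hH1, hF2, hP0, one_add_one_eq_two] using e 1
  have e3 : 3 * (L * (L - 1) * iteratedDeriv 2 F 0 ^ 2 + L * iteratedDeriv 3 F 0) =
      3 * iteratedDeriv 2 P 0 + 3 * iteratedDeriv 2 F 0 * deriv P 0 + iteratedDeriv 3 F 0 := by
    simpa [Finset.sum_range_succ, hF0, hF1, hH2, hF2, hF3, hP0, two_add_one_eq_three,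
      show Nat.choose 3 2 = 3 by rfl] using e 2
  exact ⟨by linear_combination e2, by linear_combination e3⟩

theorem iteratedDeriv_of_comp_eventuallyEq_id {𝕜 : Type*} [NontriviallyNormedField 𝕜]
    {f g : 𝕜 → 𝕜} {x : 𝕜} (hf : ContDiffAt 𝕜 3 f x) (hg : ContDiffAt 𝕜 3 g (f x))
    (hf1 : deriv f x = 1) (hgf : g ∘ f =ᶠ[𝓝 x] id) :
    deriv g (f x) = 1 ∧ iteratedDeriv 2 g (f x) = -iteratedDeriv 2 f x ∧
      iteratedDeriv 3 g (f x) = 3 * iteratedDeriv 2 f x ^ 2 - iteratedDeriv 3 f x := by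
  have e1 : deriv g (f x) = 1 := calc
    deriv g (f x) = deriv g (f x) * deriv f x := by rw [hf1, mul_one]
    _ = deriv (g ∘ f) x :=
      (deriv_comp x (hg.differentiableAt (by norm_num)) (hf.differentiableAt (by norm_num))).symm
    _ = 1 := by rw [hgf.deriv_eq, deriv_id]
  have e2 : iteratedDeriv 2 g (f x) + iteratedDeriv 2 f x = 0 := by
    simpa [iteratedDeriv_comp_two (hg.of_le (by norm_num)) (hf.of_le (by norm_num)),
      iteratedDeriv_id, hf1, e1] using hgf.iteratedDeriv_eq 2
  have e3 : iteratedDeriv 3 g (f x) + 3 * iteratedDeriv 2 g (f x) * iteratedDeriv 2 f x +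
      iteratedDeriv 3 f x = 0 := by
    simpa [iteratedDeriv_comp_three hg hf, iteratedDeriv_id, hf1, e1] using hgf.iteratedDeriv_eq 3
  exact ⟨e1, by linear_combination e2, by linear_combination e3 - 3 * iteratedDeriv 2 f x * e2⟩

noncomputable def shellLike (τ z : ℂ) : ℂ := (1 + τ ^ 2 * z ^ 2) / (1 - τ * z - τ ^ 2 * z ^ 2)

lemma analyticAt_shellLike (τ : ℂ) : AnalyticAt ℂ (shellLike τ) 0 :=
  AnalyticAt.div (by fun_prop) (by fun_prop) (by simp)

@[simp]
lemma shellLike_zero (τ : ℂ) : shellLike τ 0 = 1 := by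
  simp [shellLike]

lemma iteratedDeriv_shellLike_zero (τ : ℂ) :
    deriv (shellLike τ) 0 = τ ∧ iteratedDeriv 2 (shellLike τ) 0 = 6 * τ ^ 2 := by
  set D : ℂ → ℂ := fun z => 1 - τ * z - τ ^ 2 * z ^ 2
  have hDp : (fun z => D z * shellLike τ z) =ᶠ[𝓝 0] fun z => 1 + τ ^ 2 * z ^ 2 := by
    have hD : ContinuousAt D 0 := by fun_prop
    filter_upwards [hD.eventually_ne (show D 0 ≠ 0 by simp [D])] with z hz
    exact mul_div_cancel₀ _ hz
  -- `fun z => τ * z` is eta-reduced to `HMul.hMul τ`, which `iteratedDeriv_const_mul_field` misses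
  have hlin : ∀ n, iteratedDeriv n (τ * ·) (0 : ℂ) = τ * iteratedDeriv n (fun z => z) 0 :=
    fun n => iteratedDeriv_const_mul_field τ (fun z => z)
  have e : ∀ n, iteratedDeriv n (fun z => D z * shellLike τ z) 0 =
      iteratedDeriv n (fun z => 1 + τ ^ 2 * z ^ 2) 0 := fun n => hDp.iteratedDeriv_eq n
  have hp := (analyticAt_shellLike τ).contDiffAt (n := 2)
  have hD : ContDiffAt ℂ 2 D 0 := by fun_prop
  have e1 := e 1
  have e2 := e 2
  rw [iteratedDeriv_fun_mul (hD.of_le (by norm_num)) (hp.of_le (by norm_num))] at e1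
  rw [iteratedDeriv_fun_mul hD hp] at e2
  simp (discharger := fun_prop) only [iteratedDeriv_fun_sub, iteratedDeriv_fun_add,
    iteratedDeriv_const, iteratedDeriv_const_mul_field, iteratedDeriv_fun_pow_zero, hlin,
    iteratedDeriv_fun_id_zero, D] at e1 e2
  have h1 : deriv (shellLike τ) 0 = τ := by
    simpa [Finset.sum_range_succ, add_neg_eq_zero] using e1
  have h2 : iteratedDeriv 2 (shellLike τ) 0 - 2 * τ * τ - τ ^ 2 * 2 = τ ^ 2 * 2 := by
    simpa [Finset.sum_range_succ, h1, sub_eq_add_neg] using e2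
  exact ⟨h1, by linear_combination h2⟩

theorem iteratedDeriv_shellLike_comp_zero (τ : ℂ) {w : ℂ → ℂ} (hw : AnalyticAt ℂ w 0)
    (hw0 : w 0 = 0) :
    deriv (shellLike τ ∘ w) 0 = τ * deriv w 0 ∧
      iteratedDeriv 2 (shellLike τ ∘ w) 0 =
        6 * τ ^ 2 * deriv w 0 ^ 2 + τ * iteratedDeriv 2 w 0 := by
  have hp : AnalyticAt ℂ (shellLike τ) (w 0) := by
    rw [hw0]; exact analyticAt_shellLike τ
  obtain ⟨h1, h2⟩ := iteratedDeriv_shellLike_zero τ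
  constructor
  · rw [deriv_comp 0 hp.differentiableAt hw.differentiableAt, hw0, h1]
  · rw [iteratedDeriv_comp_two hp.contDiffAt hw.contDiffAt, hw0, h1, h2]

theorem coeff_relations_of_shellLike_subordinate {F w : ℂ → ℂ} {τ L : ℂ}
    (hF : AnalyticAt ℂ F 0) (hw : AnalyticAt ℂ w 0) (hF0 : F 0 = 0) (hF1 : deriv F 0 = 1)
    (hw0 : w 0 = 0) (h : (fun z => z * deriv F z ^ L) =ᶠ[𝓝 0] fun z => F z * shellLike τ (w z)) :
    (2 * L - 1) * iteratedDeriv 2 F 0 = 2 * (τ * deriv w 0) ∧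
      3 * L * (L - 1) * iteratedDeriv 2 F 0 ^ 2 + (3 * L - 1) * iteratedDeriv 3 F 0
        - 3 * iteratedDeriv 2 F 0 * (τ * deriv w 0) =
          3 * (6 * τ ^ 2 * deriv w 0 ^ 2 + τ * iteratedDeriv 2 w 0) := by
  obtain ⟨h1, h2⟩ := iteratedDeriv_shellLike_comp_zero τ hw hw0
  rw [← h1, ← h2]
  exact coeff_relations_of_mul_deriv_cpow_eventuallyEq hF
    ((analyticAt_shellLike τ).comp_of_eq hw hw0) hF0 hF1 h

lemma mul_deriv_cpow_eventuallyEq_of_div_eq {f P : ℂ → ℂ} {L : ℂ}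
    (hfi : InjOn f (ball 0 1)) (hf0 : f 0 = 0)
    (h : ∀ z ∈ ball (0 : ℂ) 1, z ≠ 0 → z * deriv f z ^ L / f z = P z) :
    (fun z => z * deriv f z ^ L) =ᶠ[𝓝 0] fun z => f z * P z := by
  filter_upwards [isOpen_ball.mem_nhds (mem_ball_self one_pos)] with z hz
  rcases eq_or_ne z 0 with rfl | hz0
  · simp [hf0]
  · have hfz : f z ≠ 0 := fun hfz => hz0 (hfi hz (mem_ball_self one_pos) (hfz.trans hf0.symm))
    rw [← h z hz hz0, mul_div_cancel₀ _ hfz]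

lemma mul_add_eq_of_coeff_relations {L τ a b w₁ w₂ v₁ v₂ : ℂ}
    (hf₁ : (2 * L - 1) * a = 2 * (τ * w₁))
    (hf₂ : 3 * L * (L - 1) * a ^ 2 + (3 * L - 1) * b - 3 * a * (τ * w₁) =
      3 * (6 * τ ^ 2 * w₁ ^ 2 + τ * w₂))
    (hg₁ : (2 * L - 1) * -a = 2 * (τ * v₁))
    (hg₂ : 3 * L * (L - 1) * (-a) ^ 2 + (3 * L - 1) * (3 * a ^ 2 - b) - 3 * -a * (τ * v₁) =
      3 * (6 * τ ^ 2 * v₁ ^ 2 + τ * v₂)) :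
    τ * (w₂ + v₂) = -((2 * L - 1) * (5 * L - 3) * a ^ 2) := by
  linear_combination (-1 / 3 : ℂ) * (hf₂ + hg₂)
    + (a / 2 + 3 * (τ * w₁) + 3 * (2 * L - 1) * a / 2) * hf₁
    + (-a / 2 + 3 * (τ * v₁) - 3 * (2 * L - 1) * a / 2) * hg₁

lemma le_abs_div_sqrt_of_sq_mul_le {x c R : ℝ} (hR : 0 < R) (h : x ^ 2 * R ≤ c ^ 2) :
    x ≤ |c| / √R := by
  rw [← Real.sqrt_sq_eq_abs, ← Real.sqrt_div' _ hR.le]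
  exact Real.le_sqrt_of_sq_le ((le_div_iff₀ hR).mpr h)

theorem norm_div_two_le_of_coeff_relations {τ lam : ℝ} (hτ : τ < 0) (hlam : 1 ≤ lam)
    {a w₁ v₁ w₂ v₂ : ℂ} (hw₁ : (2 * lam - 1 : ℂ) * a = 2 * (τ * w₁))
    (hv₁ : (2 * lam - 1 : ℂ) * -a = 2 * (τ * v₁))
    (hkey : (τ : ℂ) * (w₂ + v₂) = -((2 * lam - 1) * (5 * lam - 3) * a ^ 2))
    (hw₂ : ‖w₂‖ ≤ 2 * (1 - ‖w₁‖ ^ 2)) (hv₂ : ‖v₂‖ ≤ 2 * (1 - ‖v₁‖ ^ 2)) :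
    ‖a / 2‖ ≤ |τ| / √((2 * lam - 1) * (τ * (3 - 5 * lam) + 2 * lam - 1)) := by
  have c1 : ‖(2 * lam - 1 : ℂ)‖ = 2 * lam - 1 := by
    exact_mod_cast Complex.norm_of_nonneg (by linarith : (0 : ℝ) ≤ 2 * lam - 1)
  have c2 : ‖(5 * lam - 3 : ℂ)‖ = 5 * lam - 3 := by
    exact_mod_cast Complex.norm_of_nonneg (by linarith : (0 : ℝ) ≤ 5 * lam - 3)
  have cτ : ‖(τ : ℂ)‖ = -τ := by rw [Complex.norm_real, Real.norm_eq_abs, abs_of_neg hτ]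
  have n1 := congrArg norm hw₁
  have n2 := congrArg norm hv₁
  have n3 := (congrArg norm hkey).symm.trans_le (norm_mul_le _ _)
  simp only [norm_mul, norm_neg, norm_pow, c1, c2, cτ, Complex.norm_ofNat] at n1 n2 n3
  have hnorm2 : ‖w₂ + v₂‖ ≤ 2 * (1 - ‖w₁‖ ^ 2) + 2 * (1 - ‖v₁‖ ^ 2) :=
    (norm_add_le _ _).trans (add_le_add hw₂ hv₂)
  have hR : 0 < (2 * lam - 1) * (τ * (3 - 5 * lam) + 2 * lam - 1) :=
    mul_pos (by linarith) (by nlinarith)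
  have hsq₁ := congrArg (· ^ 2) n1
  have hsq₂ := congrArg (· ^ 2) n2
  have hbound := mul_le_mul_of_nonneg_left (n3.trans (mul_le_mul_of_nonneg_left hnorm2
    (neg_nonneg.mpr hτ.le))) (neg_nonneg.mpr hτ.le)
  have hmain : ‖a‖ ^ 2 * ((2 * lam - 1) * (τ * (3 - 5 * lam) + 2 * lam - 1)) ≤ 4 * τ ^ 2 := by
    nlinarith
  rw [norm_div, Complex.norm_ofNat]
  exact le_abs_div_sqrt_of_sq_mul_le hR (by nlinarith)

theorem SLB_second_coeff_bound_general (τ : ℝ) (hτ : τ = (1 - Real.sqrt 5) / 2)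
    (lam : ℝ) (hlam : 1 ≤ lam)
    (f g : ℂ → ℂ)
    (hf : AnalyticOnNhd ℂ f (Metric.ball 0 1))
    (hfi : Set.InjOn f (Metric.ball 0 1))
    (hf0 : f 0 = 0) (hf1 : deriv f 0 = 1)
    (hg : AnalyticOnNhd ℂ g (Metric.ball 0 1))
    (hgi : Set.InjOn g (Metric.ball 0 1)) (hg0 : g 0 = 0)
    (hgf : ∀ z ∈ Metric.ball (0 : ℂ) 1, f z ∈ Metric.ball (0 : ℂ) 1 → g (f z) = z)
    (p : ℂ → ℂ)
    (hp : ∀ z : ℂ, p z =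
      (1 + (τ : ℂ) ^ 2 * z ^ 2) / (1 - (τ : ℂ) * z - (τ : ℂ) ^ 2 * z ^ 2))
    (hsubf : ∃ w : ℂ → ℂ, AnalyticOnNhd ℂ w (Metric.ball 0 1) ∧ w 0 = 0 ∧
      (∀ z ∈ Metric.ball (0 : ℂ) 1, ‖w z‖ < 1) ∧
      ∀ z ∈ Metric.ball (0 : ℂ) 1, z ≠ 0 →
        z * (deriv f z) ^ (lam : ℂ) / f z = p (w z))
    (hsubg : ∃ w : ℂ → ℂ, AnalyticOnNhd ℂ w (Metric.ball 0 1) ∧ w 0 = 0 ∧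
      (∀ z ∈ Metric.ball (0 : ℂ) 1, ‖w z‖ < 1) ∧
      ∀ z ∈ Metric.ball (0 : ℂ) 1, z ≠ 0 →
        z * (deriv g z) ^ (lam : ℂ) / g z = p (w z)) :
    ‖iteratedDeriv 2 f 0 / 2‖ ≤
      |τ| / Real.sqrt ((2 * lam - 1) * (τ * (3 - 5 * lam) + 2 * lam - 1)) := by
  obtain ⟨w, hw, hw0, hw1, hfw⟩ := hsubf
  obtain ⟨v, hv, hv0, hv1, hgv⟩ := hsubg
  obtain rfl : p = shellLike τ := funext hp
  have h0 : (0 : ℂ) ∈ ball (0 : ℂ) 1 := mem_ball_self one_pos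
  have hgf' : g ∘ f =ᶠ[𝓝 0] id := by
    have hf_mem : ∀ᶠ z in 𝓝 0, f z ∈ ball (0 : ℂ) 1 :=
      (hf 0 h0).continuousAt.eventually_mem (by rw [hf0]; exact isOpen_ball.mem_nhds h0)
    filter_upwards [isOpen_ball.mem_nhds h0, hf_mem] with z hz hfz using hgf z hz hfz
  obtain ⟨hg1, hg2, hg3⟩ := iteratedDeriv_of_comp_eventuallyEq_id (hf 0 h0).contDiffAt
    (by rw [hf0]; exact (hg 0 h0).contDiffAt) hf1 hgf'
  rw [hf0] at hg1 hg2 hg3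
  obtain ⟨ef1, ef2⟩ := coeff_relations_of_shellLike_subordinate (hf 0 h0) (hw 0 h0) hf0 hf1 hw0
    (mul_deriv_cpow_eventuallyEq_of_div_eq hfi hf0 hfw)
  obtain ⟨eg1, eg2⟩ := coeff_relations_of_shellLike_subordinate (hg 0 h0) (hv 0 h0) hg0 hg1 hv0
    (mul_deriv_cpow_eventuallyEq_of_div_eq hgi hg0 hgv)
  rw [hg2] at eg1 eg2
  rw [hg3] at eg2
  have hτ0 : τ < 0 := by
    rw [hτ]; linarith [Real.lt_sqrt_of_sq_lt (show (1 : ℝ) ^ 2 < 5 by norm_num)]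
  exact norm_div_two_le_of_coeff_relations hτ0 hlam ef1 eg1
    (mul_add_eq_of_coeff_relations ef1 ef2 eg1 eg2)
    (norm_iteratedDeriv_two_le_of_mapsTo_ball hw.differentiableOn hw0
      fun z hz => mem_ball_zero_iff.mpr (hw1 z hz))
    (norm_iteratedDeriv_two_le_of_mapsTo_ball hv.differentiableOn hv0
      fun z hz => mem_ball_zero_iff.mpr (hv1 z hz))

theorem SLB_second_coeff_bound (τ : ℝ) (hτ : τ = (1 - Real.sqrt 5) / 2)
    (lam : ℝ) (hlam : 1 ≤ lam)
    (f g : ℂ → ℂ)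
    (hf : AnalyticOnNhd ℂ f (Metric.ball 0 1))
    (hfi : Set.InjOn f (Metric.ball 0 1))
    (hf0 : f 0 = 0) (hf1 : deriv f 0 = 1)
    (hg : AnalyticOnNhd ℂ g (Metric.ball 0 1))
    (hgi : Set.InjOn g (Metric.ball 0 1)) (hg0 : g 0 = 0)
    (hgf : ∀ z ∈ Metric.ball (0 : ℂ) 1, f z ∈ Metric.ball (0 : ℂ) 1 → g (f z) = z)
    (hfg : ∀ w ∈ Metric.ball (0 : ℂ) 1, g w ∈ Metric.ball (0 : ℂ) 1 → f (g w) = w)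
    (p : ℂ → ℂ)
    (hp : ∀ z : ℂ, p z =
      (1 + (τ : ℂ) ^ 2 * z ^ 2) / (1 - (τ : ℂ) * z - (τ : ℂ) ^ 2 * z ^ 2))
    (hsubf : ∃ w : ℂ → ℂ, AnalyticOnNhd ℂ w (Metric.ball 0 1) ∧ w 0 = 0 ∧
      (∀ z ∈ Metric.ball (0 : ℂ) 1, ‖w z‖ < 1) ∧
      ∀ z ∈ Metric.ball (0 : ℂ) 1, z ≠ 0 →
        z * (deriv f z) ^ (lam : ℂ) / f z = p (w z))
    (hsubg : ∃ w : ℂ → ℂ, AnalyticOnNhd ℂ w (Metric.ball 0 1) ∧ w 0 = 0 ∧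
      (∀ z ∈ Metric.ball (0 : ℂ) 1, ‖w z‖ < 1) ∧
      ∀ z ∈ Metric.ball (0 : ℂ) 1, z ≠ 0 →
        z * (deriv g z) ^ (lam : ℂ) / g z = p (w z)) :
    ‖iteratedDeriv 2 f 0 / 2‖ ≤
      |τ| / Real.sqrt ((2 * lam - 1) * (τ * (3 - 5 * lam) + 2 * lam - 1)) :=
  SLB_second_coeff_bound_general τ hτ lam hlam f g hf hfi hf0 hf1 hg hgi hg0 hgf p hp hsubf hsubg
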